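/- arXiv:1106.2962 — 3 statements merged into one kernel-verified Lean document; each statement's English description precedes it below -/
import Mathlib

section
/- Let v ∈ ℂ⁴ with ⟨v,v⟩ = 0 and ‖v‖² = 1/2, and let u ∈ ℂ⁴ \ {0} satisfy ⟨u,v⟩ = 0, ⟨u, conj v⟩ = 0, ⟨u,u⟩ = 0. Set T_v = {w : ⟨v,w⟩ = 0, Re(v,w) = 0} and T_v⁰ = {w ∈ T_v : ⟨w,w⟩ = 0}. Then T_v⁰ = (ℝ·(i v) + ℂ·u) ∪ (ℝ·(i v) + ℂ·conj(u)). -/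
/-- The standard complex bilinear symmetric form on `ℂⁿ`. -/
noncomputable def Bform {n : ℕ} (x y : Fin n → ℂ) : ℂ := ∑ i, x i * y i

/-- The standard hermitian form on `ℂⁿ` (linear in the first variable). -/
noncomputable def Hform {n : ℕ} (x y : Fin n → ℂ) : ℂ := ∑ i, x i * star (y i)

/-!
The Gram matrix of the frame `(v, v̄, u, ū)` for `⬝ᵥ` is `[[0, 1/2], [1/2, 0]] ⊕ [[0, c], [c, 0]]`
with `c = u ⬝ᵥ ū ≠ 0`, so the frame is a basis of `ℂ⁴`, and pairing `w = a v + b v̄ + μ u + ν ū`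
with it gives `v ⬝ᵥ w = b / 2`, `v ⬝ᵥ w̄ = ā / 2` and `w ⬝ᵥ w = a b + 2 μ ν c`. Hence `w ∈ T_v⁰` iff
`b = 0`, `a ∈ i ℝ` and `μ ν = 0`.
-/

open Matrix Complex
open scoped ComplexOrder

section NullFrame

variable {n : Type*} [Fintype n] {v u w : n → ℂ}

/-- The paper's `T_v⁰`. -/
def tangentNullCone (v : n → ℂ) : Set (n → ℂ) :=
  {w | v ⬝ᵥ w = 0 ∧ (v ⬝ᵥ star w).re = 0 ∧ w ⬝ᵥ w = 0}

theorem dotProduct_nullFrame_combination {a b μ ν : ℂ}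
    (hv : v ⬝ᵥ v = 0) (hn : v ⬝ᵥ star v = 1 / 2) (huv : u ⬝ᵥ v = 0)
    (huvb : u ⬝ᵥ star v = 0) (huu : u ⬝ᵥ u = 0)
    (hw : a • v + b • star v + μ • u + ν • star u = w) :
    v ⬝ᵥ w = b / 2 ∧ star v ⬝ᵥ w = a / 2 ∧
      u ⬝ᵥ w = ν * (u ⬝ᵥ star u) ∧ star u ⬝ᵥ w = μ * (u ⬝ᵥ star u) := by
  have hvu : v ⬝ᵥ u = 0 := by rw [dotProduct_comm, huv]
  have hvub : v ⬝ᵥ star u = 0 := by rw [dotProduct_star, huvb, star_zero]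
  have hvbv : star v ⬝ᵥ v = 1 / 2 := by rw [dotProduct_comm, hn]
  have hvbvb : star v ⬝ᵥ star v = 0 := by rw [star_dotProduct_star, hv, star_zero]
  have hvbu : star v ⬝ᵥ u = 0 := by rw [dotProduct_comm, huvb]
  have hvbub : star v ⬝ᵥ star u = 0 := by rw [star_dotProduct_star, huv, star_zero]
  have hubv : star u ⬝ᵥ v = 0 := by rw [dotProduct_comm, hvub]
  have hubvb : star u ⬝ᵥ star v = 0 := by rw [dotProduct_comm, hvbub]
  have hubu : star u ⬝ᵥ u = u ⬝ᵥ star u := dotProduct_comm _ _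
  have hubub : star u ⬝ᵥ star u = 0 := by rw [star_dotProduct_star, huu, star_zero]
  subst hw
  simp only [dotProduct_add, dotProduct_smul, smul_eq_mul, hv, hn, hvu, hvub, hvbv, hvbvb, hvbu,
    hvbub, huv, huvb, huu, hubv, hubvb, hubu, hubub]
  refine ⟨by ring, by ring, by ring, by ring⟩

theorem linearIndependent_nullFrame (hv : v ⬝ᵥ v = 0) (hn : v ⬝ᵥ star v = 1 / 2)
    (hu0 : u ≠ 0) (huv : u ⬝ᵥ v = 0) (huvb : u ⬝ᵥ star v = 0) (huu : u ⬝ᵥ u = 0) :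
    LinearIndependent ℂ ![v, star v, u, star u] := by
  rw [Fintype.linearIndependent_iff]
  intro g hg
  simp only [Fin.sum_univ_four, cons_val] at hg
  obtain ⟨h1, h0, h3, h2⟩ := dotProduct_nullFrame_combination hv hn huv huvb huu hg
  have hc : u ⬝ᵥ star u ≠ 0 := dotProduct_self_star_eq_zero.not.mpr hu0
  simp only [dotProduct_zero] at h0 h1 h2 h3
  intro i
  fin_cases i
  · simpa using h0.symm
  · simpa using h1.symm
  · simpa [hc] using h2.symm
  · simpa [hc] using h3.symm

theorem star_dotProduct_nullFrame_combination {a b μ ν : ℂ}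
    (hv : v ⬝ᵥ v = 0) (hn : v ⬝ᵥ star v = 1 / 2) (huv : u ⬝ᵥ v = 0)
    (huvb : u ⬝ᵥ star v = 0) (huu : u ⬝ᵥ u = 0)
    (hw : a • v + b • star v + μ • u + ν • star u = w) :
    v ⬝ᵥ star w = star a / 2 := by
  obtain ⟨-, h, -, -⟩ := dotProduct_nullFrame_combination hv hn huv huvb huu hw
  rw [dotProduct_star, dotProduct_comm, h, star_div₀, star_ofNat]

theorem dotProduct_self_nullFrame_combination {a b μ ν : ℂ}
    (hv : v ⬝ᵥ v = 0) (hn : v ⬝ᵥ star v = 1 / 2) (huv : u ⬝ᵥ v = 0)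
    (huvb : u ⬝ᵥ star v = 0) (huu : u ⬝ᵥ u = 0)
    (hw : a • v + b • star v + μ • u + ν • star u = w) :
    w ⬝ᵥ w = a * b + 2 * μ * ν * (u ⬝ᵥ star u) := by
  obtain ⟨h1, h0, h3, h2⟩ := dotProduct_nullFrame_combination hv hn huv huvb huu hw
  nth_rw 1 [← hw]
  simp only [add_dotProduct, smul_dotProduct, smul_eq_mul, h0, h1, h2, h3]
  ring

theorem smul_I_smul_add_smul_mem_tangentNullCone (hv : v ⬝ᵥ v = 0) (hn : v ⬝ᵥ star v = 1 / 2)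
    (huv : u ⬝ᵥ v = 0) (huvb : u ⬝ᵥ star v = 0) (huu : u ⬝ᵥ u = 0) (r : ℝ) (μ : ℂ) :
    r • (I • v) + μ • u ∈ tangentNullCone v := by
  have hvub : v ⬝ᵥ star u = 0 := by rw [dotProduct_star, huvb, star_zero]
  have hvu : v ⬝ᵥ u = 0 := by rw [dotProduct_comm, huv]
  refine ⟨?_, ?_, ?_⟩
  · simp only [dotProduct_add, dotProduct_smul, hv, hvu, smul_zero, add_zero]
  · simp [star_smul, hn, hvub]
  · simp only [dotProduct_add, add_dotProduct, dotProduct_smul, smul_dotProduct, hv, hvu, huv,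
      huu, smul_zero, add_zero]

theorem exists_eq_nullFrame_combination (hv : v ⬝ᵥ v = 0) (hn : v ⬝ᵥ star v = 1 / 2)
    (hu0 : u ≠ 0) (huv : u ⬝ᵥ v = 0) (huvb : u ⬝ᵥ star v = 0) (huu : u ⬝ᵥ u = 0)
    (hcard : Fintype.card n = 4) (w : n → ℂ) :
    ∃ a b μ ν : ℂ, a • v + b • star v + μ • u + ν • star u = w := by
  have hspan := (linearIndependent_nullFrame hv hn hu0 huv huvb huu).span_eq_top_of_card_eq_finrank
    (by simp [hcard])
  obtain ⟨g, hg⟩ :=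
    (Submodule.mem_span_range_iff_exists_fun ℂ).mp (hspan ▸ Submodule.mem_top (x := w))
  simp only [Fin.sum_univ_four, cons_val] at hg
  exact ⟨g 0, g 1, g 2, g 3, hg⟩

theorem tangentNullCone_subset (hv : v ⬝ᵥ v = 0) (hn : v ⬝ᵥ star v = 1 / 2)
    (hu0 : u ≠ 0) (huv : u ⬝ᵥ v = 0) (huvb : u ⬝ᵥ star v = 0) (huu : u ⬝ᵥ u = 0)
    (hcard : Fintype.card n = 4) :
    tangentNullCone v ⊆
      {w | ∃ (r : ℝ) (μ : ℂ), w = r • (I • v) + μ • u} ∪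
        {w | ∃ (r : ℝ) (μ : ℂ), w = r • (I • v) + μ • star u} := by
  rintro w ⟨hvw, hre, hww⟩
  obtain ⟨a, b, μ, ν, hw⟩ := exists_eq_nullFrame_combination hv hn hu0 huv huvb huu hcard w
  have hb : b = 0 := by
    obtain ⟨h, -⟩ := dotProduct_nullFrame_combination hv hn huv huvb huu hw
    simpa [hvw] using h.symm
  have ha : ∃ t : ℝ, a = t * I := by
    rw [star_dotProduct_nullFrame_combination hv hn huv huvb huu hw] at hre
    exact ⟨a.im, Complex.ext (by simpa using hre) (by simp)⟩
  have hμν : μ = 0 ∨ ν = 0 := by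
    rw [dotProduct_self_nullFrame_combination hv hn huv huvb huu hw, hb] at hww
    simpa [dotProduct_self_star_eq_zero.not.mpr hu0] using hww
  obtain ⟨t, rfl⟩ := ha
  subst hw hb
  rcases hμν with rfl | rfl
  · exact Or.inr ⟨t, ν, by module⟩
  · exact Or.inl ⟨t, μ, by module⟩

theorem tangentNullCone_eq (hv : v ⬝ᵥ v = 0) (hn : v ⬝ᵥ star v = 1 / 2)
    (hu0 : u ≠ 0) (huv : u ⬝ᵥ v = 0) (huvb : u ⬝ᵥ star v = 0) (huu : u ⬝ᵥ u = 0)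
    (hcard : Fintype.card n = 4) :
    tangentNullCone v =
      {w | ∃ (r : ℝ) (μ : ℂ), w = r • (I • v) + μ • u} ∪
        {w | ∃ (r : ℝ) (μ : ℂ), w = r • (I • v) + μ • star u} := by
  refine (tangentNullCone_subset hv hn hu0 huv huvb huu hcard).antisymm ?_
  have hubv : star u ⬝ᵥ v = 0 := by rw [star_dotProduct, star_eq_zero, dotProduct_comm, huvb]
  have hubvb : star u ⬝ᵥ star v = 0 := by rw [star_dotProduct_star, dotProduct_comm, huv, star_zero]
  have hubub : star u ⬝ᵥ star u = 0 := by rw [star_dotProduct_star, huu, star_zero]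
  rintro _ (⟨r, μ, rfl⟩ | ⟨r, μ, rfl⟩)
  · exact smul_I_smul_add_smul_mem_tangentNullCone hv hn huv huvb huu r μ
  · exact smul_I_smul_add_smul_mem_tangentNullCone hv hn hubv hubvb hubub r μ

end NullFrame

/-- Decomposition of the isotropic cone `T_v⁰N` as the union of two real subspaces
`(ℝ·iv + ℂ·u) ∪ (ℝ·iv + ℂ·conj u)`. -/
theorem stmt_2 (v u : Fin 4 → ℂ)
    (hv : Bform v v = 0) (hn : Hform v v = 1 / 2)
    (hu0 : u ≠ 0) (huv : Bform u v = 0)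
    (huvb : Bform u (fun i => star (v i)) = 0) (huu : Bform u u = 0) :
    {w : Fin 4 → ℂ | Bform v w = 0 ∧ (Hform v w).re = 0 ∧ Bform w w = 0} =
      {w | ∃ (r : ℝ) (μ : ℂ), w = r • (Complex.I • v) + μ • u} ∪
      {w | ∃ (r : ℝ) (μ : ℂ), w = r • (Complex.I • v) + μ • fun i => star (u i)} :=
  -- `Bform`, `Hform` and `fun i => star (u i)` unfold to `⬝ᵥ`, `⬝ᵥ star` and `star u`.
  tangentNullCone_eq hv hn hu0 huv huvb huu (Fintype.card_fin 4)
end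

section
/- Let f : M → ℝ be smooth with d'f = [Zf · ζ] in the Garfield–Lee complex of a three-dimensional Levi nondegenerate pseudohermitian CR manifold. Then D'd'f = 0 if and only if D''d'f = 0. More concretely in a pseudohermitian frame: T(Zf) + b·Zf + i·Z(Z̄Zf − i a Zf) = 0 holds if and only if c·Zf + i·Z̄(Z̄Zf − i a Zf) = 0 holds, whenever f is real-valued. -/
private lemma aux_zero {M : Type*} (D : (M → ℂ) → (M → ℂ))
    (hadd : ∀ f g : M → ℂ, D (f + g) = D f + D g) : D 0 = 0 := by
  have h := hadd 0 0
  rw [add_zero] at h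
  exact (left_eq_add.mp h)

private lemma aux_sub {M : Type*} (D : (M → ℂ) → (M → ℂ))
    (hadd : ∀ f g : M → ℂ, D (f + g) = D f + D g) (u v : M → ℂ) :
    D (u - v) = D u - D v := by
  have h0 := aux_zero D hadd
  have hneg : D (-v) = -D v := by
    have h := hadd v (-v)
    rw [add_neg_cancel, h0] at h
    linear_combination -h
  rw [sub_eq_add_neg, hadd, hneg, sub_eq_add_neg]

private lemma aux_J {M : Type*} (D : (M → ℂ) → (M → ℂ))
    (hadd : ∀ f g : M → ℂ, D (f + g) = D f + D g)
    (hmul : ∀ f g : M → ℂ, D (f * g) = D f * g + f * D g) :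
    D (fun _ => Complex.I) = 0 := by
  set J : M → ℂ := fun _ => Complex.I with hJ
  have h1 : D 1 = 0 := by
    have h := hmul 1 1
    rw [one_mul, one_mul, mul_one] at h
    exact left_eq_add.mp h
  have hneg1 : D (-1) = 0 := by
    have h := aux_sub D hadd 0 1
    rw [zero_sub, aux_zero D hadd, h1, sub_zero] at h
    exact h
  have hJJ : J * J = -1 := by
    funext x
    simp [hJ, Complex.I_mul_I]
  have h2 : J * D J + J * D J = 0 := by
    have h := hmul J J
    rw [hJJ, hneg1] at h
    linear_combination -h
  funext x
  have hx := congrFun h2 x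
  simp only [Pi.add_apply, Pi.mul_apply, Pi.zero_apply, hJ] at hx
  have hx2 : (2 * Complex.I) * D J x = 0 := by linear_combination hx
  rcases mul_eq_zero.mp hx2 with h | h
  · exact absurd h (by simp [Complex.I_ne_zero])
  · exact h

/-- For a real-valued function `f` on a three-dimensional Levi nondegenerate
pseudohermitian CR manifold, `D'd'f = 0` iff `D''d'f = 0`; in a pseudohermitian frame:
`T(Zf) + b·Zf + iZ(Z̄Zf − iaZf) = 0 ↔ c·Zf + iZ̄(Z̄Zf − iaZf) = 0`. -/
theorem stmt_7 {M : Type*} (Z Zb T : (M → ℂ) → (M → ℂ)) (a b c : M → ℂ)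
    (hZadd : ∀ f g : M → ℂ, Z (f + g) = Z f + Z g)
    (hZbadd : ∀ f g : M → ℂ, Zb (f + g) = Zb f + Zb g)
    (hTadd : ∀ f g : M → ℂ, T (f + g) = T f + T g)
    (hZmul : ∀ f g : M → ℂ, Z (f * g) = Z f * g + f * Z g)
    (hZbmul : ∀ f g : M → ℂ, Zb (f * g) = Zb f * g + f * Zb g)
    (hTmul : ∀ f g : M → ℂ, T (f * g) = T f * g + f * T g)
    (hconjZ : ∀ g : M → ℂ, Zb (star g) = star (Z g))
    (hconjT : ∀ g : M → ℂ, T (star g) = star (T g))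
    (h1 : ∀ f : M → ℂ, Complex.I • (Z (Zb f) - Zb (Z f)) = T f + a * Z f + star a * Zb f)
    (h2 : ∀ f : M → ℂ, Z (T f) - T (Z f) = b * Z f + star c * Zb f)
    (h3 : ∀ f : M → ℂ, Zb (T f) - T (Zb f) = c * Z f + star b * Zb f)
    (hb : b + star b = 0)
    (hjac : Complex.I • Z c - Complex.I • Zb b + T a - a * b - star a * c = 0)
    (f : M → ℝ) :
    (T (Z (fun x => (f x : ℂ))) + b * Z (fun x => (f x : ℂ))
        + Complex.I • Z (Zb (Z (fun x => (f x : ℂ)))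
          - Complex.I • (a * Z (fun x => (f x : ℂ)))) = 0) ↔
    (c * Z (fun x => (f x : ℂ))
        + Complex.I • Zb (Zb (Z (fun x => (f x : ℂ)))
          - Complex.I • (a * Z (fun x => (f x : ℂ)))) = 0) := by
  set J : M → ℂ := fun _ => Complex.I with hJdef
  have hsmul : ∀ u : M → ℂ, Complex.I • u = J * u := by
    intro u; funext x; simp [hJdef]
  have hJJ : J * J = -1 := by funext x; simp [hJdef, Complex.I_mul_I]
  have hsJ : star J = -J := by funext x; simp [hJdef]
  simp only [hsmul] at h1 hjac ⊢
  set F : M → ℂ := fun x => (f x : ℂ) with hFdef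
  have hsF : star F = F := by funext x; simp [hFdef, Pi.star_apply]
  have hZbF : Zb F = star (Z F) := by
    have h := hconjZ F; rwa [hsF] at h
  have hstarZb : ∀ v : M → ℂ, star (Zb v) = Z (star v) := by
    intro v
    have h := hconjZ (star v)
    rw [star_star] at h
    rw [h, star_star]
  have hZJ : Z J = 0 := aux_J Z hZadd hZmul
  have hZJmul : ∀ v : M → ℂ, Z (J * v) = J * Z v := by
    intro v; rw [hZmul, hZJ, zero_mul, zero_add]
  have hZsub := aux_sub Z hZadd
  -- e1 : conjugate of φ := Z̄ZF - J a ZF, in raw form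
  have e1 : star (Zb (Z F) - J * (a * Z F)) = Z (Zb F) + J * (star a * Zb F) := by
    rw [star_sub, hstarZb, ← hZbF, star_mul', star_mul', hsJ, ← hZbF]
    ring
  have h1F := h1 F
  have hφ : star (Zb (Z F) - J * (a * Z F))
      = (Zb (Z F) - J * (a * Z F)) - J * T F := by
    linear_combination e1 - J * h1F + (Z (Zb F) - Zb (Z F)) * hJJ
  -- e2 : conjugate of the D'' expression
  have e2 : star (c * Z F + J * Zb (Zb (Z F) - J * (a * Z F)))
      = star c * Zb F + -J * (Z (Zb (Z F) - J * (a * Z F)) - J * Z (T F)) := by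
    rw [star_add, star_mul', star_mul', hsJ, ← hZbF, hstarZb, hφ, hZsub, hZJmul]
  have h2F := h2 F
  have key : (T (Z F) + b * Z F + J * Z (Zb (Z F) - J * (a * Z F)))
      + star (c * Z F + J * Zb (Zb (Z F) - J * (a * Z F))) = 0 := by
    rw [e2]
    linear_combination -h2F + (Z (T F)) * hJJ
  constructor
  · intro h
    have h' : star (c * Z F + J * Zb (Zb (Z F) - J * (a * Z F))) = 0 := by
      linear_combination key - h
    exact star_eq_zero.mp h'
  · intro h
    have h' : star (c * Z F + J * Zb (Zb (Z F) - J * (a * Z F))) = 0 := by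
      rw [h, star_zero]
    linear_combination key - h'
end

section
/- Let f : M → ℝⁿ be smooth with Zf =: φ satisfying ⟨φ,φ⟩ = 0, ‖φ‖² = 1, and ⟨Zφ̄ + i ā φ̄, φ⟩ = 0 on M (here φ̄ = conj φ = Z̄f). Define Δ_GL f = −(ZZ̄ + i ā Z̄)f. Then ⟨Δ_GL f, Zf⟩ = 0 and ⟨Δ_GL f, Z̄f⟩ = 0. -/
/-!
Pairing `Δ_GL f` with `φ = Zf` gives minus the left side of `(5')`. Pairing it with `φ̄ = Z̄f` gives
`-⟨Zφ̄, φ̄⟩ - iā⟨φ̄, φ̄⟩`, and both terms vanish: `⟨φ̄, φ̄⟩` is the conjugate of `⟨φ, φ⟩ = 0`, and by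
the Leibniz rule `2⟨Zφ̄, φ̄⟩ = Z⟨φ̄, φ̄⟩ = 0`.
-/

theorem sum_apply_mul_self_eq_zero_of_leibniz {M R ι : Type*} [CommRing R] [NoZeroDivisors R]
    [NeZero (2 : R)] (Z : (M → R) → (M → R)) (hZadd : ∀ u v, Z (u + v) = Z u + Z v)
    (hZmul : ∀ u v, Z (u * v) = Z u * v + u * Z v) (s : Finset ι) (u : ι → M → R)
    (hu : ∑ i ∈ s, u i * u i = 0) (x : M) :
    ∑ i ∈ s, Z (u i) x * u i x = 0 := by
  let D : (M → R) →+ (M → R) := AddMonoidHom.mk' Z hZadd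
  have h : 2 * ∑ i ∈ s, Z (u i) x * u i x = 0 := by
    have hD := congrFun (congrArg D hu) x
    simp only [map_sum, map_zero, D, AddMonoidHom.mk'_apply, hZmul, Finset.sum_apply,
      Pi.add_apply, Pi.mul_apply, Pi.zero_apply] at hD
    rw [Finset.mul_sum, ← hD]
    exact Finset.sum_congr rfl fun i _ => by ring
  exact (mul_eq_zero.mp h).resolve_left two_ne_zero

theorem stmt_16_general {M : Type*} {n : ℕ} (Z Zb : (M → ℂ) → (M → ℂ)) (a : M → ℂ)
    (hZadd : ∀ u v : M → ℂ, Z (u + v) = Z u + Z v)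
    (hZmul : ∀ u v : M → ℂ, Z (u * v) = Z u * v + u * Z v)
    (f : M → Fin n → ℝ)
    (hconj : ∀ i x, Zb (fun y => ((f y i : ℝ) : ℂ)) x
      = star (Z (fun y => ((f y i : ℝ) : ℂ)) x))
    (hiso : ∀ x, ∑ i, Z (fun y => ((f y i : ℝ) : ℂ)) x
      * Z (fun y => ((f y i : ℝ) : ℂ)) x = 0)
    (h5 : ∀ x, ∑ i,
      (Z (fun y => star (Z (fun w => ((f w i : ℝ) : ℂ)) y)) x
        + Complex.I * star (a x) * star (Z (fun y => ((f y i : ℝ) : ℂ)) x))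
      * Z (fun y => ((f y i : ℝ) : ℂ)) x = 0) :
    (∀ x, ∑ i,
      (-(Z (fun y => Zb (fun w => ((f w i : ℝ) : ℂ)) y) x)
        - Complex.I * star (a x) * Zb (fun y => ((f y i : ℝ) : ℂ)) x)
      * Z (fun y => ((f y i : ℝ) : ℂ)) x = 0) ∧
    (∀ x, ∑ i,
      (-(Z (fun y => Zb (fun w => ((f w i : ℝ) : ℂ)) y) x)
        - Complex.I * star (a x) * Zb (fun y => ((f y i : ℝ) : ℂ)) x)
      * star (Z (fun y => ((f y i : ℝ) : ℂ)) x) = 0) := by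
  obtain ⟨φ, hφ⟩ : ∃ φ : Fin n → M → ℂ, ∀ i, Z (fun y => ((f y i : ℝ) : ℂ)) = φ i :=
    ⟨_, fun _ => rfl⟩
  have hZb : ∀ i, Zb (fun y => ((f y i : ℝ) : ℂ)) = fun y => star (φ i y) :=
    fun i => funext fun x => (hconj i x).trans (by rw [hφ])
  simp only [hZb, hφ] at h5 hiso ⊢
  have hiso_conj : ∀ x, ∑ i, star (φ i x) * star (φ i x) = 0 := fun x => by
    simpa [star_sum] using congrArg star (hiso x)
  have hZiso := sum_apply_mul_self_eq_zero_of_leibniz Z hZadd hZmul Finset.univ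
    (fun i y => star (φ i y)) (funext fun x => by simpa using hiso_conj x)
  refine ⟨fun x => ?_, fun x => ?_⟩
  · rw [← neg_eq_zero, ← h5 x, ← Finset.sum_neg_distrib]
    exact Finset.sum_congr rfl fun i _ => by ring
  · calc _ = -∑ i, Z (fun y => star (φ i y)) x * star (φ i x)
          - Complex.I * star (a x) * ∑ i, star (φ i x) * star (φ i x) := by
          rw [Finset.mul_sum, ← Finset.sum_neg_distrib, ← Finset.sum_sub_distrib]
          exact Finset.sum_congr rfl fun i _ => by ring
      _ = 0 := by rw [hZiso x, hiso_conj x]; ring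

/-- For an `ℝⁿ`-valued `f` with `φ = Zf` satisfying `⟨φ,φ⟩ = 0`, `‖φ‖² = 1` and
`⟨Zφ̄ + iāφ̄, φ⟩ = 0`, the Garfield–Lee Laplacian `Δ_GL f = −(ZZ̄ + iāZ̄)f`
satisfies `⟨Δ_GL f, Zf⟩ = 0` and `⟨Δ_GL f, Z̄f⟩ = 0`. -/
theorem stmt_16 {M : Type*} {n : ℕ} (Z Zb : (M → ℂ) → (M → ℂ)) (a : M → ℂ)
    (hZadd : ∀ u v : M → ℂ, Z (u + v) = Z u + Z v)
    (hZmul : ∀ u v : M → ℂ, Z (u * v) = Z u * v + u * Z v)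
    (f : M → Fin n → ℝ)
    (hconj : ∀ i x, Zb (fun y => ((f y i : ℝ) : ℂ)) x
      = star (Z (fun y => ((f y i : ℝ) : ℂ)) x))
    (hiso : ∀ x, ∑ i, Z (fun y => ((f y i : ℝ) : ℂ)) x
      * Z (fun y => ((f y i : ℝ) : ℂ)) x = 0)
    (hnorm : ∀ x, ∑ i, Z (fun y => ((f y i : ℝ) : ℂ)) x
      * star (Z (fun y => ((f y i : ℝ) : ℂ)) x) = 1)
    (h5 : ∀ x, ∑ i,
      (Z (fun y => star (Z (fun w => ((f w i : ℝ) : ℂ)) y)) x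
        + Complex.I * star (a x) * star (Z (fun y => ((f y i : ℝ) : ℂ)) x))
      * Z (fun y => ((f y i : ℝ) : ℂ)) x = 0) :
    (∀ x, ∑ i,
      (-(Z (fun y => Zb (fun w => ((f w i : ℝ) : ℂ)) y) x)
        - Complex.I * star (a x) * Zb (fun y => ((f y i : ℝ) : ℂ)) x)
      * Z (fun y => ((f y i : ℝ) : ℂ)) x = 0) ∧
    (∀ x, ∑ i,
      (-(Z (fun y => Zb (fun w => ((f w i : ℝ) : ℂ)) y) x)
        - Complex.I * star (a x) * Zb (fun y => ((f y i : ℝ) : ℂ)) x)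
      * star (Z (fun y => ((f y i : ℝ) : ℂ)) x) = 0) :=
  stmt_16_general Z Zb a hZadd hZmul f hconj hiso h5
end
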